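/- arXiv:2309.14652 — 7 statements merged into one kernel-verified Lean document; each statement's English description precedes it below -/
import Mathlib

section
/- Let P : ℝ → ℝ be continuous, positive and antitone (nonincreasing) on (0,∞). Let c > 0, let M ∈ (0, c), and let D be a Borel probability measure on ℝ supported in [-M, M] whose mean μ = ∫ η dD(η) is strictly positive. Then for every γ ∈ ℝ there exists p₀ ∈ ℝ such that for all p̂ ≥ p₀, the expected deviation gain −γ + ∫ ( η·p̂ + ∫_{c+η}^{c} P(a) da ) dD(η) is strictly positive. (This is the key step showing a noisy CFMM with positive-mean noise trades is not truthful for any finite privacy fee.) -/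
open MeasureTheory intervalIntegral

/-!
Splitting the expected gain gives `μ * phat + I - γ`, where `I` is the `D`-integral of
`η ↦ ∫ a in (c + η)..c, P a`. Because `D` lives on `[-M, M]` and `P` is monotone, hence locally
integrable, on `[c - M, c + M] ⊆ (0, ∞)`, this function is continuous on the support and `I` is
a finite constant, so the term `μ * phat` with `μ > 0` wins once `phat` is large.
-/

theorem MeasureTheory.Integrable.of_ae_mem_of_continuousOn {X E : Type*} [TopologicalSpace X]
    [T2Space X] [MeasurableSpace X] [OpensMeasurableSpace X] [NormedAddCommGroup E]
    {μ : Measure X} [IsFiniteMeasure μ] {K : Set X} {f : X → E} (hK : IsCompact K)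
    (hμK : ∀ᵐ x ∂μ, x ∈ K) (hf : ContinuousOn f K) : Integrable f μ := by
  rw [← Measure.restrict_eq_self_of_ae_mem hμK]
  exact hf.integrableOn_compact hK

theorem continuousOn_integral_from_add {f : ℝ → ℝ} {c M : ℝ} (hM : 0 ≤ M)
    (hf : IntervalIntegrable f volume (c - M) (c + M)) :
    ContinuousOn (fun η => ∫ a in (c + η)..c, f a) (Set.Icc (-M) M) := by
  have hc : c ∈ Set.uIcc (c - M) (c + M) := by
    rw [Set.uIcc_of_le (by linarith)]
    constructor <;> linarith
  have hprim : ContinuousOn (fun x => ∫ a in x..c, f a) (Set.uIcc (c - M) (c + M)) := by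
    simp only [integral_symm c]
    exact (continuousOn_primitive_interval' hf hc).neg
  refine hprim.comp (continuousOn_const.add continuousOn_id) fun η hη => ?_
  rw [Set.uIcc_of_le (by linarith)]
  constructor <;> linarith [hη.1, hη.2]

theorem positive_mean_noise_not_truthful_general
    (P : ℝ → ℝ)
    (hPanti : AntitoneOn P (Set.Ioi 0))
    (c M : ℝ) (hM : 0 < M) (hMc : M < c)
    (D : Measure ℝ) [IsProbabilityMeasure D]
    (hsupp : ∀ᵐ η ∂D, η ∈ Set.Icc (-M) M)
    (hmean : 0 < ∫ η, η ∂D) :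
    ∀ γ : ℝ, ∃ p₀ : ℝ, ∀ phat : ℝ, p₀ ≤ phat →
      0 < -γ + ∫ η, (η * phat + ∫ a in (c + η)..c, P a) ∂D := by
  intro γ
  have hPint : IntervalIntegrable P volume (c - M) (c + M) := by
    refine (hPanti.mono fun a ha => ?_).intervalIntegrable
    rw [Set.uIcc_of_le (by linarith)] at ha
    exact lt_of_lt_of_le (by linarith) ha.1
  have hid : Integrable (fun η : ℝ => η) D :=
    .of_ae_mem_of_continuousOn isCompact_Icc hsupp continuousOn_id
  have hgain : Integrable (fun η => ∫ a in (c + η)..c, P a) D :=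
    .of_ae_mem_of_continuousOn isCompact_Icc hsupp
      (continuousOn_integral_from_add hM.le hPint)
  refine ⟨(γ - ∫ η, (∫ a in (c + η)..c, P a) ∂D + 1) / ∫ η, η ∂D, fun phat hphat => ?_⟩
  rw [integral_add (hid.mul_const phat) hgain, MeasureTheory.integral_mul_const]
  have hlarge := (div_le_iff₀ hmean).1 hphat
  linarith

/-- A noisy CFMM with positive-mean noise trades is not truthful for any finite
privacy fee: for any fee `γ` there is a threshold `p₀` such that for every true
price `phat ≥ p₀` the expected deviation gain is strictly positive. -/
theorem positive_mean_noise_not_truthful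
    (P : ℝ → ℝ)
    (hPcont : ContinuousOn P (Set.Ioi 0))
    (hPpos : ∀ x ∈ Set.Ioi (0 : ℝ), 0 < P x)
    (hPanti : AntitoneOn P (Set.Ioi 0))
    (c M : ℝ) (hc : 0 < c) (hM : 0 < M) (hMc : M < c)
    (D : Measure ℝ) [IsProbabilityMeasure D]
    (hsupp : ∀ᵐ η ∂D, η ∈ Set.Icc (-M) M)
    (hmean : 0 < ∫ η, η ∂D) :
    ∀ γ : ℝ, ∃ p₀ : ℝ, ∀ phat : ℝ, p₀ ≤ phat →
      0 < -γ + ∫ η, (η * phat + ∫ a in (c + η)..c, P a) ∂D :=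
  positive_mean_noise_not_truthful_general P hPanti c M hM hMc D hsupp hmean
end

section
/- Let P : ℝ → ℝ be continuous and strictly antitone (strictly decreasing) on (0,∞), let x₀ > 0, and suppose x* > 0 satisfies P(x*) = p̂. Then for every t > 0, ∫_{x₀}^{t} (P(a) − p̂) da ≤ ∫_{x₀}^{x*} (P(a) − p̂) da; that is, among all single trades, the arbitrage profit ∫_{x₀}^{t} (P(a) − p̂) da is maximized by the trade that moves the CFMM reserves to the point x* where the spot price equals the true price p̂. -/
open MeasureTheory intervalIntegral

/-- Optimal arbitrage on a CFMM: if `P` is continuous and strictly decreasing on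
`(0,∞)` and `P(x*) = phat`, then among all single trades moving the reserves from
`x₀` to `t > 0`, the arbitrage profit `∫_{x₀}^{t} (P(a) − phat) da` is maximized
at `t = x*`, i.e. by aligning the CFMM spot price with the true price. -/
theorem optimal_arbitrage_aligns_spot_price
    (P : ℝ → ℝ)
    (hPcont : ContinuousOn P (Set.Ioi 0))
    (hPanti : StrictAntiOn P (Set.Ioi 0))
    (x₀ : ℝ) (hx₀ : 0 < x₀)
    (xstar phat : ℝ) (hxstar : 0 < xstar) (hphat : P xstar = phat) :
    ∀ t : ℝ, 0 < t →
      (∫ a in x₀..t, (P a - phat)) ≤ ∫ a in x₀..xstar, (P a - phat) := by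
  intro t ht
  set f : ℝ → ℝ := fun a => P a - phat with hf
  have hint : ∀ a b : ℝ, 0 < a → 0 < b → IntervalIntegrable f volume a b := by
    intro a b ha hb
    apply ContinuousOn.intervalIntegrable
    apply ContinuousOn.sub (hPcont.mono ?_) continuousOn_const
    intro x hx
    exact lt_of_lt_of_le (lt_min ha hb) hx.1
  have key : (0 : ℝ) ≤ ∫ a in t..xstar, f a := by
    rcases le_total t xstar with h | h
    · apply _root_.intervalIntegral.integral_nonneg h
      intro a ha
      have ha0 : 0 < a := lt_of_lt_of_le ht ha.1
      have hle : phat ≤ P a := by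
        rcases eq_or_lt_of_le ha.2 with he | hl
        · rw [he, hphat]
        · exact le_of_lt (hphat ▸ hPanti (Set.mem_Ioi.mpr ha0) (Set.mem_Ioi.mpr hxstar) hl)
      simpa [hf] using sub_nonneg.mpr hle
    · rw [integral_symm xstar t]
      have hneg : (0 : ℝ) ≤ ∫ a in xstar..t, (-f a) := by
        apply _root_.intervalIntegral.integral_nonneg h
        intro a ha
        have ha0 : 0 < a := lt_of_lt_of_le hxstar ha.1
        have hle' : P a ≤ phat := by
          rcases eq_or_lt_of_le ha.1 with he | hl
          · rw [← he, hphat]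
          · exact le_of_lt (hphat ▸ hPanti (Set.mem_Ioi.mpr hxstar) (Set.mem_Ioi.mpr ha0) hl)
        simpa [hf] using sub_nonpos.mpr hle'
      rw [intervalIntegral.integral_neg] at hneg
      linarith
  have hsplit := _root_.intervalIntegral.integral_add_adjacent_intervals
    (hint x₀ t hx₀ ht) (hint t xstar ht hxstar)
  linarith [hsplit]
end

section
/- Let (Ω, F, 𝕡) be a probability space with filtration (F_n)_{n∈ℕ}, let M > 0 and δ > M, and let P : ℝ → ℝ be continuous, positive and antitone on (0,∞). Let D be a Borel probability measure on ℝ supported in [-M, M] with zero mean. For each n let s_n : Ω → ℝ be F_n-measurable with s_n ≥ δ, and let η_n : Ω → ℝ be F_{n+1}-measurable, independent of F_n, with law D. Define the noise fee Γ(s) = ∫ ( ∫_{s+η}^{s} (P(a) − P(s)) da ) dD(η) and, for a fixed true price p̂ ∈ ℝ, the excess-profit process M_n = Σ_{i < n} ( −Γ(s_i) + ∫_{s_i+η_i}^{s_i} (P(a) − p̂) da ). Then (M_n) is a martingale with respect to (F_n) with M_0 = 0, and consequently 𝔼[M_τ] = 0 for every bounded stopping time τ. (This is the core of the theorem that, with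 privacy fee equal to the noise fee, a zero-mean noisy CFMM mechanism is truthful: no adaptive, finitely-bounded trading strategy gains in expectation from the noise trades.) -/
open MeasureTheory intervalIntegral ProbabilityTheory

/-!
Write `g(x, e) = ∫_{x+e}^{x} (P a - p̂) da` for the excess gain of a noise trade `e` at reserve
level `x`. Replacing the price `p̂` by `P x` changes `g(x, e)` by `(P x - p̂) e`, which has
`D`-mean zero, so `Γ(x) = ∫ g(x, e) dD(e)`: the `i`-th increment of `M` is `g(s_i, η_i)` minus
its mean over the law of `η_i` with `s_i` held fixed. As `s_i` is `F_i`-measurable and `η_i` is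
independent of `F_i`, freezing `s_i` shows that every increment integrates to zero over every
`F_i`-set, so `M` is a martingale, and optional sampling at a bounded stopping time gives
`𝔼[M_τ] = 𝔼[M_0] = 0`. The increments are bounded because `0 < P ≤ P(δ - M)` on all reserve
levels reachable from `s_i ≥ δ`.
-/

open Set Filter Topology

section

variable {α : Type*} [LinearOrder α] [TopologicalSpace α] [OrderTopology α]

theorem exists_mem_eventually_le_nhdsWithin {T : Set α} {x : α} (hx : x ∈ T) :
    ∃ a ∈ T, ∀ᶠ u in 𝓝[T] x, a ≤ u := by
  by_cases h : ∃ a ∈ T, a < x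
  · obtain ⟨a, haT, hax⟩ := h
    exact ⟨a, haT, eventually_nhdsWithin_of_eventually_nhds <|
      (eventually_gt_nhds hax).mono fun _ => le_of_lt⟩
  · push Not at h
    exact ⟨x, hx, eventually_nhdsWithin_of_forall h⟩

end

section

variable {E : Type*} [NormedAddCommGroup E]

theorem ordConnected_setOf_intervalIntegrable (f : ℝ → E) (μ : Measure ℝ) (c : ℝ) :
    {u | IntervalIntegrable f μ u c}.OrdConnected := by
  refine ⟨fun x hx y hy z hz => ?_⟩
  have hxz : IntervalIntegrable f μ z x :=
    (hx.trans hy.symm).mono_set (uIcc_subset_uIcc (Icc_subset_uIcc hz) left_mem_uIcc)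
  exact hxz.trans hx

variable [NormedSpace ℝ E] {μ : Measure ℝ} [NullSingletonClass μ]

theorem continuousOn_intervalIntegral_left (f : ℝ → E) (c : ℝ) :
    ContinuousOn (fun u => ∫ x in u..c, f x ∂μ) {u | IntervalIntegrable f μ u c} := by
  intro u₀ hu₀
  obtain ⟨a, ha, hau⟩ := exists_mem_eventually_le_nhdsWithin hu₀
  obtain ⟨b, hb, hub⟩ := exists_mem_eventually_le_nhdsWithin (α := ℝᵒᵈ) hu₀
  have hab : ∀ᶠ u in 𝓝[{u | IntervalIntegrable f μ u c}] u₀, u ∈ Icc a b := hau.and hub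
  have hsplit : ∀ u ∈ {u | IntervalIntegrable f μ u c},
      ∫ x in u..c, f x ∂μ = (∫ x in u..b, f x ∂μ) + ∫ x in b..c, f x ∂μ := fun u hu =>
    (integral_add_adjacent_intervals (hu.trans hb.symm) hb).symm
  have hcont : ContinuousOn (fun u => (∫ x in u..b, f x ∂μ) + ∫ x in b..c, f x ∂μ) (uIcc a b) :=
    (continuousOn_primitive_interval_left
      ((intervalIntegrable_iff' (μ := μ)).1 (ha.trans hb.symm))).add continuousOn_const
  refine ((hcont _ ?_).mono_of_mem_nhdsWithin ?_).congr hsplit (hsplit u₀ hu₀)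
  · exact Icc_subset_uIcc (hab.self_of_nhdsWithin hu₀)
  · exact mem_of_superset hab Icc_subset_uIcc

variable [MeasurableSpace E] [BorelSpace E]

theorem measurable_intervalIntegral_left (f : ℝ → E) (c : ℝ) :
    Measurable fun u => ∫ x in u..c, f x ∂μ := by
  classical
  have h : (fun u => ∫ x in u..c, f x ∂μ) =
      {u | IntervalIntegrable f μ u c}.piecewise (fun u => ∫ x in u..c, f x ∂μ) 0 := by
    ext u
    by_cases hu : IntervalIntegrable f μ u c
    · simp [hu]
    · simp [hu, integral_undef hu]
  rw [h]
  exact (continuousOn_intervalIntegral_left f c).measurable_piecewise continuousOn_const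
    (ordConnected_setOf_intervalIntegrable f μ c).measurableSet

theorem Measurable.intervalIntegral_of_intervalIntegrable [SecondCountableTopology E]
    {Ω : Type*} {mΩ : MeasurableSpace Ω} {f : ℝ → E} {c : ℝ} {w v : Ω → ℝ} (hw : Measurable w)
    (hv : Measurable v) (hint : ∀ ω, IntervalIntegrable f μ c (v ω)) :
    Measurable fun ω => ∫ x in w ω..v ω, f x ∂μ := by
  set T := {u | IntervalIntegrable f μ u c}
  -- Off `w ⁻¹' T`, `f` is integrable neither on `w..c` nor on `w..v`: both integrals are junk `0`.
  have h : ∀ ω, ∫ x in w ω..v ω, f x ∂μ =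
      (∫ x in w ω..c, f x ∂μ) + (w ⁻¹' T).indicator (fun ω => -∫ x in v ω..c, f x ∂μ) ω := by
    intro ω
    by_cases hω : w ω ∈ T
    · rw [indicator_of_mem (show ω ∈ w ⁻¹' T from hω), ← integral_symm,
        integral_add_adjacent_intervals hω (hint ω)]
    · have hwv : ¬IntervalIntegrable f μ (w ω) (v ω) := fun h => hω (h.trans (hint ω).symm)
      rw [indicator_of_notMem (show ω ∉ w ⁻¹' T from hω), integral_undef hω, integral_undef hwv,
        add_zero]
  simp_rw [h]
  exact ((measurable_intervalIntegral_left f c).comp hw).add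
    (((measurable_intervalIntegral_left f c).comp hv).neg.indicator
      (hw (ordConnected_setOf_intervalIntegrable f μ c).measurableSet))

end

namespace ProbabilityTheory

variable {Ω β γ E : Type*} {m mΩ : MeasurableSpace Ω} {mβ : MeasurableSpace β}
  {mγ : MeasurableSpace γ} [NormedAddCommGroup E] [NormedSpace ℝ E]
  {P : Measure Ω} [IsFiniteMeasure P]

theorem IndepFun.integral_comp_eq_integral_integral {W : Ω → β} {X : Ω → γ}
    (hWX : IndepFun W X P) (hW : AEMeasurable W P) (hX : AEMeasurable X P)
    {f : β × γ → E} (hf : StronglyMeasurable f) (hint : Integrable (fun ω => f (W ω, X ω)) P) :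
    ∫ ω, f (W ω, X ω) ∂P = ∫ ω, ∫ x, f (W ω, x) ∂(P.map X) ∂P := by
  have hWX' : AEMeasurable (fun ω => (W ω, X ω)) P := hW.prodMk hX
  have hmap : P.map (fun ω => (W ω, X ω)) = (P.map W).prod (P.map X) :=
    (indepFun_iff_map_prod_eq_prod_map_map hW hX).1 hWX
  have hint' : Integrable f ((P.map W).prod (P.map X)) := by
    rw [← hmap]
    exact (integrable_map_measure hf.aestronglyMeasurable hWX').2 hint
  calc ∫ ω, f (W ω, X ω) ∂P = ∫ z, f z ∂(P.map fun ω => (W ω, X ω)) :=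
        (integral_map hWX' hf.aestronglyMeasurable).symm
    _ = ∫ w, ∫ x, f (w, x) ∂(P.map X) ∂(P.map W) := by rw [hmap, integral_prod f hint']
    _ = ∫ ω, ∫ x, f (W ω, x) ∂(P.map X) ∂P :=
        integral_map hW (hf.integral_prod_right' (ν := P.map X)).aestronglyMeasurable

theorem Indep.setIntegral_comp_eq_setIntegral_integral (hm : m ≤ mΩ)
    {W : Ω → β} {X : Ω → γ} (hindep : Indep (mγ.comap X) m P) (hW : Measurable[m] W)
    (hX : AEMeasurable X P) {f : β × γ → E} (hf : StronglyMeasurable f)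
    (hint : Integrable (fun ω => f (W ω, X ω)) P) {A : Set Ω} (hA : MeasurableSet[m] A) :
    ∫ ω in A, f (W ω, X ω) ∂P = ∫ ω in A, ∫ x, f (W ω, x) ∂(P.map X) ∂P := by
  -- Apply the unconditional statement to the pair `(W, 1_A)` in place of `W`.
  set Y : Ω → β × ℝ := fun ω => (W ω, A.indicator 1 ω)
  have hY : Measurable[m] Y := hW.prodMk (measurable_const.indicator hA)
  have hYX : IndepFun Y X P :=
    (IndepFun_iff_Indep Y X P).2 (indep_of_indep_of_le_left hindep.symm hY.comap_le)
  have hind : ∀ g : Ω → E, (fun ω => (Y ω).2 • g ω) = A.indicator g := fun g => by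
    ext ω; by_cases hω : ω ∈ A <;> simp [Y, hω]
  have hf' : StronglyMeasurable fun p : (β × ℝ) × γ => p.1.2 • f (p.1.1, p.2) :=
    measurable_fst.snd.stronglyMeasurable.smul
      (hf.comp_measurable (measurable_fst.fst.prodMk measurable_snd))
  have key := hYX.integral_comp_eq_integral_integral ((hY.mono hm le_rfl).aemeasurable) hX hf'
    (by rw [hind fun ω => f (W ω, X ω)]; exact hint.indicator (hm A hA))
  simp_rw [MeasureTheory.integral_smul] at key
  rw [← MeasureTheory.integral_indicator (hm A hA), ← MeasureTheory.integral_indicator (hm A hA),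
    ← hind, ← hind]
  exact key

end ProbabilityTheory

namespace MeasureTheory

variable {Ω E : Type*} {mΩ : MeasurableSpace Ω} [NormedAddCommGroup E] [NormedSpace ℝ E]
  [CompleteSpace E] {P : Measure Ω} [IsFiniteMeasure P] {ℱ : Filtration ℕ mΩ}

theorem martingale_sum_of_setIntegral_eq_zero {d : ℕ → Ω → E}
    (hd : ∀ i, StronglyMeasurable[ℱ (i + 1)] (d i))
    (hint : ∀ i, Integrable (d i) P)
    (hzero : ∀ i A, MeasurableSet[ℱ i] A → ∫ ω in A, d i ω ∂P = 0) :
    Martingale (fun n ω => ∑ i ∈ Finset.range n, d i ω) ℱ P := by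
  have hint_sum : ∀ n, Integrable (fun ω => ∑ i ∈ Finset.range n, d i ω) P :=
    fun n => integrable_finsetSum _ fun i _ => hint i
  refine martingale_of_setIntegral_eq_succ (fun n => ?_) hint_sum fun n A hA => ?_
  · exact Finset.stronglyMeasurable_fun_sum _ fun i hi =>
      (hd i).mono (ℱ.mono (Finset.mem_range.1 hi))
  · simp only [Finset.sum_range_succ]
    rw [integral_add (hint_sum n).integrableOn (hint n).integrableOn, hzero n A hA, add_zero]

theorem Martingale.integral_stoppedValue_eq_integral_initial {f : ℕ → Ω → E}
    (hf : Martingale f ℱ P) {τ : Ω → WithTop ℕ} (hτ : IsStoppingTime ℱ τ) {N : ℕ}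
    (hτN : ∀ ω, τ ω ≤ N) :
    ∫ ω, stoppedValue f τ ω ∂P = ∫ ω, f 0 ω ∂P := by
  rw [integral_congr_ae (hf.stoppedValue_ae_eq_condExp_of_le_const hτ hτN), integral_condExp,
    integral_congr_ae (hf.condExp_ae_eq (Nat.zero_le N)).symm, integral_condExp]
  simp only [Nat.cast_id]

end MeasureTheory

namespace ProbabilityTheory

variable {Ω β γ E : Type*} {mΩ : MeasurableSpace Ω} {mβ : MeasurableSpace β}
  {mγ : MeasurableSpace γ} [NormedAddCommGroup E] [NormedSpace ℝ E] [CompleteSpace E]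
  {P : Measure Ω} [IsFiniteMeasure P]

theorem martingale_sum_sub_integral {ℱ : Filtration ℕ mΩ} {W : ℕ → Ω → β} {X : ℕ → Ω → γ}
    {ν : Measure γ} (hW : ∀ n, Measurable[ℱ n] (W n)) (hX : ∀ n, Measurable[ℱ (n + 1)] (X n))
    (hindep : ∀ n, Indep (mγ.comap (X n)) (ℱ n) P) (hlaw : ∀ n, P.map (X n) = ν)
    {f : β × γ → E} (hf : StronglyMeasurable f) {C : ℝ} (hbound : ∀ᵐ x ∂ν, ∀ b, ‖f (b, x)‖ ≤ C) :
    Martingale (fun n ω => ∑ i ∈ Finset.range n, (f (W i ω, X i ω) - ∫ x, f (W i ω, x) ∂ν))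
      ℱ P := by
  have : IsFiniteMeasure ν := hlaw 0 ▸ inferInstance
  have hW' : ∀ n, Measurable[ℱ (n + 1)] (W n) := fun n => (hW n).mono (ℱ.mono n.le_succ) le_rfl
  have hX' : ∀ n, Measurable (X n) := fun n => (hX n).mono (ℱ.le _) le_rfl
  have hfWX : ∀ n, StronglyMeasurable[ℱ (n + 1)] fun ω => f (W n ω, X n ω) := fun n =>
    hf.comp_measurable ((hW' n).prodMk (hX n))
  have hfW : ∀ n, StronglyMeasurable[ℱ n] fun ω => ∫ x, f (W n ω, x) ∂ν := fun n =>
    (hf.integral_prod_right' (ν := ν)).comp_measurable (hW n)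
  have hint_fWX : ∀ n, Integrable (fun ω => f (W n ω, X n ω)) P := fun n =>
    Integrable.of_bound ((hfWX n).mono (ℱ.le _)).aestronglyMeasurable C
      ((ae_of_ae_map (hX' n).aemeasurable ((hlaw n).symm ▸ hbound)).mono fun ω h => h (W n ω))
  have hint_fW : ∀ n, Integrable (fun ω => ∫ x, f (W n ω, x) ∂ν) P := fun n =>
    Integrable.of_bound ((hfW n).mono (ℱ.le _)).aestronglyMeasurable (C * ν.real Set.univ)
      (ae_of_all _ fun ω => norm_integral_le_of_norm_le_const (hbound.mono fun x h => h _))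
  refine martingale_sum_of_setIntegral_eq_zero
    (fun n => (hfWX n).sub ((hfW n).mono (ℱ.mono n.le_succ)))
    (fun n => (hint_fWX n).sub (hint_fW n)) fun n A hA => ?_
  rw [integral_sub (hint_fWX n).integrableOn (hint_fW n).integrableOn, sub_eq_zero, ← hlaw n]
  exact (hindep n).setIntegral_comp_eq_setIntegral_integral (ℱ.le n) (hW n) (hX' n).aemeasurable
    hf (hint_fWX n) hA

end ProbabilityTheory

section Cfmm

variable {P : ℝ → ℝ}

theorem ContinuousOn.intervalIntegrable_of_Ioi {E : Type*} [NormedAddCommGroup E] {f : ℝ → E}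
    {c a b : ℝ} (hf : ContinuousOn f (Ioi c)) (ha : c < a) (hb : c < b) :
    IntervalIntegrable f volume a b :=
  (hf.mono fun _ ht => (lt_min ha hb).trans_le ht.1).intervalIntegrable

theorem norm_intervalIntegral_add_sub_le (hPpos : ∀ x ∈ Ioi (0 : ℝ), 0 < P x)
    (hPanti : AntitoneOn P (Ioi 0)) {M c x e : ℝ} (hc : M < c) (hx : c ≤ x)
    (he : e ∈ Icc (-M) M) (p : ℝ) :
    ‖∫ a in (x + e)..x, (P a - p)‖ ≤ (P (c - M) + |p|) * M := by
  have hcM : 0 < c - M := sub_pos.2 hc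
  refine (intervalIntegral.norm_integral_le_of_norm_le_const (C := P (c - M) + |p|)
    fun t ht => ?_).trans ?_
  · have hct : c - M ≤ t :=
      (le_min (by linarith [he.1]) (by linarith [he.1, he.2])).trans (uIoc_subset_uIcc ht).1
    have ht0 : 0 < t := hcM.trans_le hct
    calc ‖P t - p‖ ≤ |P t| + |p| := abs_sub _ _
      _ ≤ P (c - M) + |p| := by
        rw [abs_of_pos (hPpos t ht0)]
        gcongr
        exact hPanti hcM ht0 hct
  · have := hPpos (c - M) hcM
    gcongr
    rw [sub_add_cancel_left, abs_neg]
    exact abs_le.2 he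

theorem integral_intervalIntegral_sub_eq (hPcont : ContinuousOn P (Ioi 0))
    (hPpos : ∀ x ∈ Ioi (0 : ℝ), 0 < P x) (hPanti : AntitoneOn P (Ioi 0))
    {D : Measure ℝ} [IsProbabilityMeasure D] {M : ℝ} (hsupp : ∀ᵐ e ∂D, e ∈ Icc (-M) M)
    (hmean : ∫ e, e ∂D = 0) {x : ℝ} (hx : M < x) (p q : ℝ) :
    ∫ e, (∫ a in (x + e)..x, (P a - p)) ∂D = ∫ e, (∫ a in (x + e)..x, (P a - q)) ∂D := by
  have hx0 : ∀ e ∈ Icc (-M) M, 0 < x + e := fun e he => by linarith [he.1]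
  have hshift : ∀ᵐ e ∂D,
      ∫ a in (x + e)..x, (P a - p) = (∫ a in (x + e)..x, (P a - q)) + (p - q) * e := by
    filter_upwards [hsupp] with e he
    have hint : IntervalIntegrable (fun a => P a - q) volume (x + e) x :=
      (hPcont.sub continuousOn_const).intervalIntegrable_of_Ioi (hx0 e he)
        (by linarith [he.1, he.2])
    simp_rw [show ∀ a, P a - p = (P a - q) - (p - q) by intro a; ring]
    rw [integral_sub hint intervalIntegrable_const, intervalIntegral.integral_const, smul_eq_mul]
    ring
  have hint : Integrable (fun e => ∫ a in (x + e)..x, (P a - q)) D :=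
    Integrable.of_bound (Measurable.intervalIntegral_of_intervalIntegrable (by fun_prop)
      measurable_const fun _ => IntervalIntegrable.refl).aestronglyMeasurable _
      (hsupp.mono fun e he => norm_intervalIntegral_add_sub_le hPpos hPanti hx le_rfl he q)
  have hid : Integrable (fun e : ℝ => e) D :=
    Integrable.of_bound measurable_id.aestronglyMeasurable M (hsupp.mono fun e he => abs_le.2 he)
  rw [integral_congr_ae hshift, integral_add hint (hid.const_mul _),
    MeasureTheory.integral_const_mul, hmean, mul_zero, add_zero]

end Cfmm

/-- With privacy fee equal to the noise fee, the excess-profit process of an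
adaptive arbitrageur trading against a zero-mean noisy CFMM is a martingale
starting at `0`; hence by optional stopping its expectation is `0` at every
bounded stopping time.  This is the core of the truthfulness theorem. -/
theorem noisy_cfmm_excess_profit_martingale
    {Ω : Type*} {m0 : MeasurableSpace Ω} (prob : Measure Ω) [IsProbabilityMeasure prob]
    (ℱ : Filtration ℕ m0)
    (M δ : ℝ) (hM : 0 < M) (hδ : M < δ)
    (P : ℝ → ℝ)
    (hPcont : ContinuousOn P (Set.Ioi 0))
    (hPpos : ∀ x ∈ Set.Ioi (0 : ℝ), 0 < P x)
    (hPanti : AntitoneOn P (Set.Ioi 0))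
    (D : Measure ℝ) [IsProbabilityMeasure D]
    (hsupp : ∀ᵐ e ∂D, e ∈ Set.Icc (-M) M)
    (hmean : ∫ e, e ∂D = 0)
    (s : ℕ → Ω → ℝ)
    (hs_meas : ∀ n, Measurable[ℱ n] (s n))
    (hs_ge : ∀ n ω, δ ≤ s n ω)
    (η : ℕ → Ω → ℝ)
    (hη_meas : ∀ n, Measurable[ℱ (n + 1)] (η n))
    (hη_indep : ∀ n, Indep (MeasurableSpace.comap (η n) (borel ℝ)) (ℱ n) prob)
    (hη_law : ∀ n, Measure.map (η n) prob = D)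
    (Γ : ℝ → ℝ)
    (hΓ : ∀ x : ℝ, Γ x = ∫ e, (∫ a in (x + e)..x, (P a - P x)) ∂D)
    (phat : ℝ)
    (Mex : ℕ → Ω → ℝ)
    (hMex : ∀ n ω, Mex n ω = ∑ i ∈ Finset.range n,
      (-Γ (s i ω) + ∫ a in (s i ω + η i ω)..(s i ω), (P a - phat))) :
    Martingale Mex ℱ prob ∧ (∀ ω, Mex 0 ω = 0) ∧
      ∀ τ : Ω → ℕ, IsStoppingTime ℱ (fun ω => (τ ω : WithTop ℕ)) → (∃ N : ℕ, ∀ ω, τ ω ≤ N) →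
        ∫ ω, Mex (τ ω) ω ∂prob = 0 := by
  have hδ0 : 0 < δ := hM.trans hδ
  -- Restricting the reserve level to `Ici δ` makes `g` measurable although `x + e` may leave the
  -- domain of `P`: only the integrability of `P` on `[δ, x]` is needed.
  set g : Ici δ × ℝ → ℝ := fun p => ∫ a in (p.1 + p.2 : ℝ)..p.1, (P a - phat)
  have hg : StronglyMeasurable g :=
    (Measurable.intervalIntegral_of_intervalIntegrable (c := δ) (by fun_prop) (by fun_prop)
      fun p => (hPcont.sub continuousOn_const).intervalIntegrable_of_Ioi hδ0
        (hδ0.trans_le p.1.2)).stronglyMeasurable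
  have hg_bound : ∀ᵐ e ∂D, ∀ x : Ici δ, ‖g (x, e)‖ ≤ (P (δ - M) + |phat|) * M :=
    hsupp.mono fun e he x => norm_intervalIntegral_add_sub_le hPpos hPanti hδ x.2 he phat
  have hΓg : ∀ x : Ici δ, Γ x = ∫ e, g (x, e) ∂D := fun x =>
    (hΓ x).trans (integral_intervalIntegral_sub_eq hPcont hPpos hPanti hsupp hmean
      (hδ.trans_le x.2) (P x) phat)
  have hMex_eq : Mex = fun n ω => ∑ i ∈ Finset.range n,
      (g (⟨s i ω, hs_ge i ω⟩, η i ω) - ∫ e, g (⟨s i ω, hs_ge i ω⟩, e) ∂D) := by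
    ext n ω
    rw [hMex]
    refine Finset.sum_congr rfl fun i _ => ?_
    rw [hΓg ⟨s i ω, hs_ge i ω⟩]
    ring
  have hmart : Martingale Mex ℱ prob := hMex_eq ▸ martingale_sum_sub_integral
    (fun n => (hs_meas n).subtype_mk) hη_meas hη_indep hη_law hg hg_bound
  refine ⟨hmart, fun ω => by simp [hMex], fun τ hτ ⟨N, hN⟩ => ?_⟩
  have h := hmart.integral_stoppedValue_eq_integral_initial hτ (N := N)
    fun ω => by exact_mod_cast hN ω
  exact h.trans (by simp [hMex])
end

section
/- Let P : ℝ → ℝ be continuous on a neighborhood of c > 0 and differentiable at c, let M > 0, and let D be a Borel probability measure on ℝ supported in [-M, M] with zero mean and second moment σ² = ∫ η² dD(η). Then lim_{t → 0⁺} (1/t²) · ∫ ( ∫_{c+tη}^{c} (P(a) − P(c)) da ) dD(η) = −(P′(c)/2) · σ². In particular, for small noise trades the noise fee is asymptotically σ²/2 times −P′(c), i.e., inversely proportional to the CFMM's liquidity L = 1/P′(c) at the spot price P(c). -/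
open MeasureTheory intervalIntegral Filter Asymptotics Set Topology

/-! The fee of a single trade `h`, `g h = ∫ a in (c + h)..c, (P a - P c)`, is
`-(P'/2) h² + o(h²)` because the integrand is `P' (a - c) + o(a - c)`. Hence
`g (t η) / t² → -(P'/2) η²` for each `η`, and `|g (t η)| / t² ≤ C M²` on the support of `D`,
so dominated convergence gives the limit `-(P'/2) ∫ η² dD`. -/

theorem HasDerivAt.intervalIntegral_sub_sub_isLittleO_sq {P : ℝ → ℝ} {P' c : ℝ}
    (hP : HasDerivAt P P' c) (hint : ∀ᶠ x in 𝓝 c, IntervalIntegrable P volume c x) :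
    (fun h => (∫ a in c..c + h, (P a - P c)) - P' / 2 * h ^ 2) =o[𝓝 0] fun h => h ^ 2 := by
  have hc : Tendsto (fun h : ℝ => c + h) (𝓝 0) (𝓝 c) := by
    simpa using tendsto_const_nhds (x := c) |>.add (tendsto_id (x := 𝓝 (0 : ℝ)))
  refine IsLittleO.of_bound fun ε hε => ?_
  have hlin : ∀ᶠ h in 𝓝 (0 : ℝ), ∀ a ∈ uIcc c (c + h),
      ‖P a - P c - (a - c) • P'‖ ≤ ε * ‖a - c‖ :=
    (tendsto_const_nhds.uIcc hc).eventually
      (eventually_smallSets_forall.2 (hP.isLittleO.bound hε))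
  filter_upwards [hlin, hc.eventually hint] with h hlin hint
  have hlinear : ∫ a in c..c + h, (a - c) • P' = P' / 2 * h ^ 2 := by
    rw [intervalIntegral.integral_smul_const, integral_comp_sub_right (fun a => a), integral_id,
      smul_eq_mul]
    ring
  have hremainder : (∫ a in c..c + h, (P a - P c)) - P' / 2 * h ^ 2
      = ∫ a in c..c + h, (P a - P c - (a - c) • P') := by
    rw [← hlinear, ← integral_sub (hint.sub intervalIntegrable_const)
      ((by fun_prop : Continuous fun a => (a - c) • P').intervalIntegrable _ _)]
  calc ‖(∫ a in c..c + h, (P a - P c)) - P' / 2 * h ^ 2‖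
      = ‖∫ a in c..c + h, (P a - P c - (a - c) • P')‖ := by rw [hremainder]
    _ ≤ ε * |h| * |c + h - c| := by
      refine norm_integral_le_of_norm_le_const fun a ha => (hlin a (uIoc_subset_uIcc ha)).trans ?_
      gcongr
      simpa using abs_sub_left_of_mem_uIcc (uIoc_subset_uIcc ha)
    _ = ε * ‖h ^ 2‖ := by simp [abs_mul_abs_self, mul_assoc, sq]

theorem tendsto_inv_sq_mul_comp_mul {g : ℝ → ℝ} {q : ℝ}
    (hg : (fun h => g h - q * h ^ 2) =o[𝓝 0] fun h => h ^ 2) (η : ℝ) :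
    Tendsto (fun t => 1 / t ^ 2 * g (t * η)) (𝓝[≠] 0) (𝓝 (q * η ^ 2)) := by
  have hη : Tendsto (fun t : ℝ => t * η) (𝓝 0) (𝓝 0) := by
    simpa using (tendsto_id (x := 𝓝 (0 : ℝ))).mul_const η
  have hsq : (fun t : ℝ => (t * η) ^ 2) =O[𝓝 0] fun t => t ^ 2 :=
    (isBigO_const_mul_self (η ^ 2) _ _).congr_left fun t => by ring
  have hrem : (fun t => g (t * η) - q * (t * η) ^ 2) =o[𝓝 0] fun t => t ^ 2 :=
    (hg.comp_tendsto hη).trans_isBigO hsq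
  have hlim := (hrem.tendsto_div_nhds_zero.mono_left (nhdsWithin_le_nhds (s := {0}ᶜ))).add_const
    (q * η ^ 2)
  rw [zero_add] at hlim
  refine hlim.congr' ?_
  filter_upwards [self_mem_nhdsWithin] with t (ht : t ≠ 0)
  field_simp
  ring

theorem tendsto_inv_sq_mul_integral_comp_mul {g : ℝ → ℝ} {q M : ℝ} {U : Set ℝ}
    {D : Measure ℝ} [IsFiniteMeasure D]
    (hg : (fun h => g h - q * h ^ 2) =o[𝓝 0] fun h => h ^ 2)
    (hU : U ∈ 𝓝 0) (hg_cont : ContinuousOn g U) (hsupp : ∀ᵐ η ∂D, η ∈ Icc (-M) M) :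
    Tendsto (fun t => 1 / t ^ 2 * ∫ η, g (t * η) ∂D) (𝓝[>] 0) (𝓝 (q * ∫ η, η ^ 2 ∂D)) := by
  simp_rw [← MeasureTheory.integral_const_mul]
  have hsmall :
      Tendsto (fun t : ℝ => Icc (-(t * M)) (t * M)) (𝓝[>] 0) (𝓝 0).smallSets := by
    have : Tendsto (fun t : ℝ => t * M) (𝓝[>] 0) (𝓝 0) := by
      simpa using ((tendsto_id (x := 𝓝 (0 : ℝ))).mul_const M).mono_left nhdsWithin_le_nhds
    exact (by simpa using this.neg : Tendsto (fun t : ℝ => -(t * M)) _ (𝓝 0)).Icc this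
  have hgO : g =O[𝓝 0] fun h => h ^ 2 :=
    (hg.isBigO.add (isBigO_const_mul_self q _ _)).congr_left fun h => by ring
  obtain ⟨C, hC, hCg⟩ := hgO.exists_pos
  have hgood :
      ∀ᶠ t in 𝓝[>] 0, ∀ h ∈ Icc (-(t * M)) (t * M), h ∈ U ∧ ‖g h‖ ≤ C * ‖h ^ 2‖ :=
    hsmall.eventually <| eventually_smallSets_forall.2 <|
      (show ∀ᶠ h in 𝓝 0, h ∈ U from hU).and hCg.bound
  have hmaps : ∀ t > 0, MapsTo (fun η => t * η) (Icc (-M) M) (Icc (-(t * M)) (t * M)) :=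
    fun t ht η hη => ⟨by nlinarith [hη.1], by nlinarith [hη.2]⟩
  refine tendsto_integral_filter_of_dominated_convergence (fun _ => C * M ^ 2)
    ?_ ?_ (integrable_const _) (ae_of_all _ fun η => ?_)
  · filter_upwards [hgood, self_mem_nhdsWithin] with t ht (htpos : 0 < t)
    rw [← Measure.restrict_eq_self_of_ae_mem hsupp]
    refine (ContinuousOn.aestronglyMeasurable ?_ measurableSet_Icc).const_mul _
    exact hg_cont.comp (continuous_const.mul continuous_id).continuousOn
      fun η hη => (ht _ (hmaps t htpos hη)).1
  · filter_upwards [hgood, self_mem_nhdsWithin] with t ht (htpos : 0 < t)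
    filter_upwards [hsupp] with η hη
    calc ‖1 / t ^ 2 * g (t * η)‖ ≤ 1 / t ^ 2 * (C * ‖(t * η) ^ 2‖) := by
          rw [norm_mul, Real.norm_of_nonneg (by positivity)]
          gcongr
          exact (ht _ (hmaps t htpos hη)).2
      _ = C * η ^ 2 := by
          rw [Real.norm_of_nonneg (by positivity)]
          field_simp
      _ ≤ C * M ^ 2 := mul_le_mul_of_nonneg_left (sq_le_sq' hη.1 hη.2) hC.le
  · exact (tendsto_inv_sq_mul_comp_mul hg η).mono_left
      (nhdsWithin_mono _ fun t (ht : 0 < t) => ht.ne')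

theorem noise_fee_asymptotics_inverse_liquidity_general
    (P : ℝ → ℝ) (c : ℝ)
    (U : Set ℝ) (hU : U ∈ nhds c) (hPcont : ContinuousOn P U)
    (P' : ℝ) (hP' : HasDerivAt P P' c)
    (M : ℝ)
    (D : Measure ℝ) [IsProbabilityMeasure D]
    (hsupp : ∀ᵐ η ∂D, η ∈ Set.Icc (-M) M)
    (σsq : ℝ) (hσsq : σsq = ∫ η, η ^ 2 ∂D) :
    Tendsto (fun t : ℝ => (1 / t ^ 2) * ∫ η, (∫ a in (c + t * η)..c, (P a - P c)) ∂D)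
      (nhdsWithin 0 (Set.Ioi 0)) (nhds (-(P' / 2) * σsq)) := by
  obtain ⟨r, hr, hrU⟩ := Metric.nhds_basis_closedBall.mem_iff.1 hU
  have hI : uIcc (c - r) (c + r) = Icc (c - r) (c + r) := uIcc_of_le (by linarith)
  rw [Real.closedBall_eq_Icc, ← hI] at hrU
  have hint : IntervalIntegrable P volume (c - r) (c + r) := (hPcont.mono hrU).intervalIntegrable
  have hc_mem : c ∈ uIcc (c - r) (c + r) := by rw [hI]; constructor <;> linarith
  have hint_near : ∀ᶠ x in 𝓝 c, IntervalIntegrable P volume c x := by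
    filter_upwards [Icc_mem_nhds (by linarith : c - r < c) (by linarith : c < c + r)] with x hx
    exact hint.mono_set (uIcc_subset_uIcc hc_mem (hI ▸ hx))
  have hfee : (fun h => (∫ a in (c + h)..c, (P a - P c)) - -(P' / 2) * h ^ 2) =o[𝓝 0]
      fun h => h ^ 2 :=
    (hP'.intervalIntegral_sub_sub_isLittleO_sq hint_near).neg_left.congr_left fun h => by
      rw [integral_symm]; ring
  have hfee_cont : ContinuousOn (fun h => ∫ a in (c + h)..c, (P a - P c)) (Icc (-r) r) := by
    simp_rw [integral_symm c]
    refine ((continuousOn_primitive_interval' (hint.sub intervalIntegrable_const) hc_mem).comp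
      (continuous_const_add c).continuousOn fun h hh => ?_).neg
    rw [hI]
    exact ⟨by linarith [hh.1], by linarith [hh.2]⟩
  rw [hσsq]
  exact tendsto_inv_sq_mul_integral_comp_mul hfee (Icc_mem_nhds (by linarith) hr) hfee_cont hsupp

/-- For small noise trades the noise fee is asymptotically `-(P'(c)/2) · σ²`,
i.e. `σ²/2` times the inverse of the CFMM's liquidity `L = 1/P'(c)`:
`lim_{t → 0⁺} (1/t²) ∫ ∫_{c+tη}^{c} (P(a) − P(c)) da dD(η) = −(P'(c)/2)·σ²`. -/
theorem noise_fee_asymptotics_inverse_liquidity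
    (P : ℝ → ℝ) (c : ℝ) (hc : 0 < c)
    (U : Set ℝ) (hU : U ∈ nhds c) (hPcont : ContinuousOn P U)
    (P' : ℝ) (hP' : HasDerivAt P P' c)
    (M : ℝ) (hM : 0 < M)
    (D : Measure ℝ) [IsProbabilityMeasure D]
    (hsupp : ∀ᵐ η ∂D, η ∈ Set.Icc (-M) M)
    (hmean : ∫ η, η ∂D = 0)
    (σsq : ℝ) (hσsq : σsq = ∫ η, η ^ 2 ∂D) :
    Tendsto (fun t : ℝ => (1 / t ^ 2) * ∫ η, (∫ a in (c + t * η)..c, (P a - P c)) ∂D)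
      (nhdsWithin 0 (Set.Ioi 0)) (nhds (-(P' / 2) * σsq)) :=
  noise_fee_asymptotics_inverse_liquidity_general P c U hU hPcont P' hP' M D hsupp σsq hσsq
end

section
/- Fix K > 0, Δ ∈ ℝ, and η₁, η₂ ∈ ℝ with η₁·η₂ ≠ 0. Define Γ(K', x) = −K'·η₁·η₂ / ( (x+Δ)·(x+Δ+η₁)·(x+Δ+η₂) ). Then lim_{x → ∞} Γ(4K, 2x) / Γ(K, x) = 1/2. (Doubling the liquidity of the constant product CFMM—quadrupling K and doubling the reserve level x—asymptotically halves the privacy fee for a fixed trade Δ and fixed two-point noise.) -/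
open Filter Topology

/-!
Writing `D x = (x + Δ)(x + Δ + η₁)(x + Δ + η₂)`, the common factor `-K η₁ η₂` cancels and
`Γ(4K, 2x) / Γ(K, x) = 4 · D x / D (2x)`. Each of the three linear factors of `D x / D (2x)`
tends to `1/2`, so the ratio tends to `4 · (1/2)³ = 1/2`.
-/

theorem tendsto_linear_div_linear_atTop (a b c d : ℝ) (hc : c ≠ 0) :
    Tendsto (fun x : ℝ => (a * x + b) / (c * x + d)) atTop (𝓝 (a / c)) := by
  have hinv (e : ℝ) : Tendsto (fun x : ℝ => e / x) atTop (𝓝 0) :=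
    tendsto_const_nhds.div_atTop tendsto_id
  have hlim : Tendsto (fun x : ℝ => (a + b / x) / (c + d / x)) atTop (𝓝 (a / c)) := by
    have := ((hinv b).const_add a).div ((hinv d).const_add c) (by rwa [add_zero])
    rwa [add_zero, add_zero] at this
  refine hlim.congr' ?_
  filter_upwards [eventually_ne_atTop 0] with x hx
  rw [← div_div_div_cancel_right₀ hx (a * x + b)]
  congr 1 <;> field_simp

theorem eventually_pos_add_const_atTop (b : ℝ) : ∀ᶠ x : ℝ in atTop, 0 < x + b :=
  (tendsto_atTop_add_const_right _ b tendsto_id).eventually_gt_atTop 0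

/-- Doubling the liquidity of the constant product CFMM (quadrupling `K` and
doubling the reserve level `x`) asymptotically halves the privacy fee for a fixed
trade `Δ` and fixed two-point noise: `lim_{x → ∞} Γ(4K, 2x) / Γ(K, x) = 1/2`. -/
theorem doubling_liquidity_halves_fee
    (K Δ η₁ η₂ : ℝ) (hK : 0 < K) (hη : η₁ * η₂ ≠ 0)
    (Γ : ℝ → ℝ → ℝ)
    (hΓ : ∀ K' x : ℝ, Γ K' x
      = -K' * η₁ * η₂ / ((x + Δ) * (x + Δ + η₁) * (x + Δ + η₂))) :
    Tendsto (fun x : ℝ => Γ (4 * K) (2 * x) / Γ K x) atTop (nhds (1 / 2)) := by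
  set D : ℝ → ℝ := fun x => (x + Δ) * (x + Δ + η₁) * (x + Δ + η₂)
  have hfactor (b : ℝ) : Tendsto (fun x : ℝ => (x + b) / (2 * x + b)) atTop (𝓝 (1 / 2)) := by
    simpa using tendsto_linear_div_linear_atTop 1 b 2 b two_ne_zero
  have hD : Tendsto (fun x => 4 * (D x / D (2 * x))) atTop (𝓝 (1 / 2)) := by
    have := (((hfactor Δ).mul (hfactor (Δ + η₁))).mul (hfactor (Δ + η₂))).const_mul 4
    norm_num at this
    refine this.congr fun x => ?_
    simp only [D, mul_div_mul_comm, add_assoc]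
  refine hD.congr' ?_
  filter_upwards [eventually_pos_add_const_atTop Δ, eventually_pos_add_const_atTop (Δ + η₁),
    eventually_pos_add_const_atTop (Δ + η₂)] with x h₀ h₁ h₂
  have hη₁ : η₁ ≠ 0 := left_ne_zero_of_mul hη
  have hη₂ : η₂ ≠ 0 := right_ne_zero_of_mul hη
  simp only [hΓ, D]
  field_simp [hK.ne']
end

section
/- Let l, u ∈ ℝ with l < u, let ε > 0, and let Δ ∈ ℝ. Set Δ′ = (2Δ − (u+l))/(u − l), κ = (exp(ε) − 1)/(exp(ε) + 1), b = ((u−l)/2)·(exp(ε)+1)/(exp(ε)−1), n₋ = (u+l)/2 − Δ − b, n₊ = (u+l)/2 − Δ + b, q₋ = (1/2)(1 − Δ′κ) and q₊ = (1/2)(1 + Δ′κ). Then q₋·n₋ + q₊·n₊ = 0; that is, the noise added by the binary mechanism has mean zero. -/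
/-- The noise added by the binary mechanism of Duchi, Jordan and Wainwright has
mean zero: `q₋·n₋ + q₊·n₊ = 0`. -/
theorem binary_mechanism_zero_mean
    (l u ε Δ Δ' κ b nm np qm qp : ℝ) (hlu : l < u) (hε : 0 < ε)
    (hΔ' : Δ' = (2 * Δ - (u + l)) / (u - l))
    (hκ : κ = (Real.exp ε - 1) / (Real.exp ε + 1))
    (hb : b = ((u - l) / 2) * (Real.exp ε + 1) / (Real.exp ε - 1))
    (hnm : nm = (u + l) / 2 - Δ - b)
    (hnp : np = (u + l) / 2 - Δ + b)
    (hqm : qm = (1 / 2) * (1 - Δ' * κ))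
    (hqp : qp = (1 / 2) * (1 + Δ' * κ)) :
    qm * nm + qp * np = 0 := by
  have h1 : Real.exp ε - 1 ≠ 0 := by
    have := Real.one_lt_exp_iff.mpr hε; linarith
  have h2 : Real.exp ε + 1 ≠ 0 := by positivity
  have h3 : u - l ≠ 0 := by linarith
  subst hΔ' hκ hb hnm hnp hqm hqp
  field_simp
  ring
end

section
/- Let l, u ∈ ℝ with l < u and let ε > 0. Set κ = (exp(ε) − 1)/(exp(ε) + 1), and for Δ ∈ [l,u] set Δ′ = (2Δ − (u+l))/(u−l), q₋(Δ) = (1/2)(1 − Δ′κ) and q₊(Δ) = (1/2)(1 + Δ′κ). Then for all Δ₁, Δ₂ ∈ [l, u], both q₋(Δ₁) ≤ exp(ε)·q₋(Δ₂) and q₊(Δ₁) ≤ exp(ε)·q₊(Δ₂). Consequently the binary mechanism, whose output on input Δ is (u+l)/2 − b with probability q₋(Δ) and (u+l)/2 + b with probability q₊(Δ), where b = ((u−l)/2)·(exp(ε)+1)/(exp(ε)−1), satisfies (τ = [l,u], ε)-personalized local differential privacy. -/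
open MeasureTheory

/-- The binary mechanism of Duchi, Jordan and Wainwright satisfies
`(τ = [l,u], ε)`-personalized local differential privacy: its two output
probabilities satisfy the ratio bounds `q₋(Δ₁) ≤ exp(ε)·q₋(Δ₂)` and
`q₊(Δ₁) ≤ exp(ε)·q₊(Δ₂)` for all `Δ₁, Δ₂ ∈ [l,u]`, and consequently the output
distribution `A Δ` satisfies `A Δ₁ O ≤ exp(ε) · A Δ₂ O` for every measurable `O`. -/
theorem binary_mechanism_pldp
    (l u ε : ℝ) (hlu : l < u) (hε : 0 < ε)
    (κ b : ℝ)
    (hκ : κ = (Real.exp ε - 1) / (Real.exp ε + 1))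
    (hb : b = ((u - l) / 2) * (Real.exp ε + 1) / (Real.exp ε - 1))
    (Δ' qm qp : ℝ → ℝ)
    (hΔ' : ∀ Δ : ℝ, Δ' Δ = (2 * Δ - (u + l)) / (u - l))
    (hqm : ∀ Δ : ℝ, qm Δ = (1 / 2) * (1 - Δ' Δ * κ))
    (hqp : ∀ Δ : ℝ, qp Δ = (1 / 2) * (1 + Δ' Δ * κ))
    (A : ℝ → Measure ℝ)
    (hA : ∀ Δ : ℝ, A Δ = ENNReal.ofReal (qm Δ) • Measure.dirac ((u + l) / 2 - b)
        + ENNReal.ofReal (qp Δ) • Measure.dirac ((u + l) / 2 + b)) :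
    (∀ Δ₁ ∈ Set.Icc l u, ∀ Δ₂ ∈ Set.Icc l u,
        qm Δ₁ ≤ Real.exp ε * qm Δ₂ ∧ qp Δ₁ ≤ Real.exp ε * qp Δ₂) ∧
    (∀ Δ₁ ∈ Set.Icc l u, ∀ Δ₂ ∈ Set.Icc l u, ∀ O : Set ℝ, MeasurableSet O →
        A Δ₁ O ≤ ENNReal.ofReal (Real.exp ε) * A Δ₂ O) := by
  have hE : 1 < Real.exp ε := by
    have := Real.add_one_lt_exp (x := ε) (by positivity)
    linarith
  have hE1 : (0:ℝ) < Real.exp ε + 1 := by linarith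
  have hκ0 : 0 ≤ κ := by
    rw [hκ]; apply div_nonneg <;> linarith
  have hκ1 : κ < 1 := by
    rw [hκ, div_lt_one hE1]; linarith
  have hkey : Real.exp ε * (1 - κ) = 1 + κ := by
    rw [hκ]; field_simp; ring
  have hul : (0:ℝ) < u - l := by linarith
  have hd : ∀ Δ ∈ Set.Icc l u, -1 ≤ Δ' Δ ∧ Δ' Δ ≤ 1 := by
    intro Δ hΔ
    obtain ⟨h1, h2⟩ := hΔ
    rw [hΔ']
    constructor
    · rw [le_div_iff₀ hul]; linarith
    · rw [div_le_one hul]; linarith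
  have hmain : ∀ Δ₁ ∈ Set.Icc l u, ∀ Δ₂ ∈ Set.Icc l u,
      qm Δ₁ ≤ Real.exp ε * qm Δ₂ ∧ qp Δ₁ ≤ Real.exp ε * qp Δ₂ := by
    intro Δ₁ h1 Δ₂ h2
    obtain ⟨hd1l, hd1u⟩ := hd Δ₁ h1
    obtain ⟨hd2l, hd2u⟩ := hd Δ₂ h2
    rw [hqm, hqm, hqp, hqp]
    constructor
    · nlinarith [mul_le_mul_of_nonneg_right hd2u hκ0,
        mul_le_mul_of_nonneg_right hd1l hκ0, hE.le]
    · nlinarith [mul_le_mul_of_nonneg_right hd2l hκ0,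
        mul_le_mul_of_nonneg_right hd1u hκ0, hE.le]
  refine ⟨hmain, ?_⟩
  intro Δ₁ h1 Δ₂ h2 O hO
  obtain ⟨hqm12, hqp12⟩ := hmain Δ₁ h1 Δ₂ h2
  rw [hA, hA]
  simp only [Measure.coe_add, Measure.coe_smul, Pi.add_apply, Pi.smul_apply,
    smul_eq_mul]
  rw [mul_add, ← mul_assoc, ← mul_assoc, ← ENNReal.ofReal_mul (Real.exp_pos ε).le,
    ← ENNReal.ofReal_mul (Real.exp_pos ε).le]
  gcongr
  all_goals first
    | exact ENNReal.ofReal_le_ofReal hqm12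
    | exact ENNReal.ofReal_le_ofReal hqp12
end
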